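/- Let 𝒳 = {a, 0, 1, 2}. For q = (q_0, q_1, q_2) ∈ [0,1]³ define a probability mass function p_q on 𝒳 × 𝒳 by p_q(a,a) = 2/5, p_q(i,i) = (1 − q_i)/5 and p_q(i, i⊕1) = q_i/5 for i ∈ {0,1,2} (where ⊕ denotes addition modulo 3 on {0,1,2}), and p_q(x,y) = 0 for all other pairs. Define the mutual information I(q) := ∑_{(x,y): p_q(x,y) > 0} p_q(x,y) · log₂( p_q(x,y) / ( p_q^X(x) · p_q^Y(y) ) ), where p_q^X and p_q^Y are the first and second marginals of p_q. Then min_{q ∈ [0,1]³} I(q) = log₂(5/2); in particular I(q) ≥ log₂(5/2) for every q ∈ [0,1]³, with equality at q = (1/2, 1/2, 1/2). -/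

import Mathlib

open scoped BigOperators
open Classical

noncomputable section

/-- The alphabet `𝒳 = {a, 0, 1, 2}` of Example 2, encoded as `Option (Fin 3)` with
`none = a` and `some i = i` for `i ∈ {0,1,2}`. -/
abbrev X17 : Type := Option (Fin 3)

/-- The joint distribution `p_q` on `𝒳 × 𝒳` determined by the input-dependent jamming
randomization `q = (q₀,q₁,q₂)`: `p_q(a,a) = 2/5`, `p_q(i,i) = (1−qᵢ)/5`,
`p_q(i, i⊕1) = qᵢ/5` (addition mod 3), and `0` elsewhere. -/
def pq (q : Fin 3 → ℝ) : X17 → X17 → ℝ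
  | none, none => 2 / 5
  | some i, some j =>
      if j = i then (1 - q i) / 5 else if j = i + 1 then q i / 5 else 0
  | _, _ => 0

/-- First marginal of `p_q`. -/
def pqX (q : Fin 3 → ℝ) (x : X17) : ℝ := ∑ y : X17, pq q x y

/-- Second marginal of `p_q`. -/
def pqY (q : Fin 3 → ℝ) (y : X17) : ℝ := ∑ x : X17, pq q x y

/-- Mutual information `I(q) = ∑_{(x,y) : p_q(x,y)>0} p_q(x,y) log₂(p_q(x,y)/(p_q^X(x) p_q^Y(y)))`. -/
def mutualInfo (q : Fin 3 → ℝ) : ℝ :=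
  ∑ x : X17, ∑ y : X17,
    if 0 < pq q x y then
      pq q x y * Real.logb 2 (pq q x y / (pqX q x * pqY q y))
    else 0

/-!
Group the terms of `I(q)` by output letter. The output `a` only comes from the input `a` and
contributes `(2/5) log₂ (5/2)`. An output `j ∈ {0,1,2}` only comes from the inputs `j` and
`j - 1`, each of probability `1/5`; if it receives masses `u` and `v`, it contributes
`(u + v) (log₂ 5 - h(u / (u + v)))`, where `h ≤ 1` is the binary entropy in bits. The output
masses of `0, 1, 2` add up to `3/5`, so `I(q) ≥ (2/5 + 3/5) log₂ (5/2)`, with equality when every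
`h` equals one bit, as at `q = (1/2, 1/2, 1/2)`.
-/

open Real

theorem neg_mul_log_two_le_mul_log_div_add (u v : ℝ) (hu : 0 ≤ u) (hv : 0 ≤ v) :
    -((u + v) * log 2) ≤ u * log (u / (u + v)) + v * log (v / (u + v)) := by
  rcases (add_nonneg hu hv).eq_or_lt with hs | hs
  · obtain ⟨rfl, rfl⟩ : u = 0 ∧ v = 0 := ⟨by linarith, by linarith⟩
    simp
  have hv' : v / (u + v) = 1 - u / (u + v) := by field_simp; ring
  have hent : u * log (u / (u + v)) + v * log (v / (u + v)) =
      -((u + v) * binEntropy (u / (u + v))) := by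
    rw [hv', binEntropy, log_inv, log_inv]
    field_simp
    ring
  rw [hent, neg_le_neg_iff]
  exact mul_le_mul_of_nonneg_left binEntropy_le_log_two hs.le

theorem mul_log_div_mul (c u s : ℝ) (hc : c ≠ 0) (hus : u ≠ 0 → s ≠ 0) :
    u * log (u / (c * s)) = u * log c⁻¹ + u * log (u / s) := by
  rcases eq_or_ne u 0 with rfl | hu
  · simp
  rw [div_mul_eq_div_div_swap, div_eq_inv_mul _ c,
    log_mul (inv_ne_zero hc) (div_ne_zero hu (hus hu))]
  ring

/-- The contribution to the mutual information of an output letter reached from two input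
letters, each of probability `c`, with joint masses `u` and `v`. -/
def pairInfo (c u v : ℝ) : ℝ :=
  u * logb 2 (u / (c * (u + v))) + v * logb 2 (v / (c * (u + v)))

theorem mul_logb_inv_div_two_le_pairInfo (c u v : ℝ) (hc : 0 < c) (hu : 0 ≤ u) (hv : 0 ≤ v) :
    (u + v) * logb 2 (c⁻¹ / 2) ≤ pairInfo c u v := by
  have hu' : u ≠ 0 → u + v ≠ 0 := fun h => (add_pos_of_pos_of_nonneg (hu.lt_of_ne' h) hv).ne'
  have hv' : v ≠ 0 → u + v ≠ 0 := fun h => (add_pos_of_nonneg_of_pos hu (hv.lt_of_ne' h)).ne'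
  have key : (u + v) * log (c⁻¹ / 2) ≤
      u * log (u / (c * (u + v))) + v * log (v / (c * (u + v))) := by
    rw [mul_log_div_mul c u _ hc.ne' hu', mul_log_div_mul c v _ hc.ne' hv',
      log_div (inv_ne_zero hc.ne') two_ne_zero]
    linarith [neg_mul_log_two_le_mul_log_div_add u v hu hv]
  simp only [pairInfo, logb, mul_div_assoc']
  rw [← add_div]
  exact div_le_div_of_nonneg_right key (log_nonneg one_le_two)

theorem pairInfo_self (c u : ℝ) : pairInfo c u u = (u + u) * logb 2 (c⁻¹ / 2) := by
  rcases eq_or_ne u 0 with rfl | hu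
  · simp [pairInfo]
  rw [pairInfo, show u / (c * (u + u)) = c⁻¹ / 2 by field_simp; ring]
  ring

theorem pq_nonneg {q : Fin 3 → ℝ} (hq : ∀ i, q i ∈ Set.Icc (0 : ℝ) 1) (x y : X17) :
    0 ≤ pq q x y := by
  rcases x with _ | i <;> rcases y with _ | j <;> simp only [pq, le_refl]
  · norm_num
  · obtain ⟨h0, h1⟩ := hq i
    split_ifs <;> linarith

theorem pqX_none (q : Fin 3 → ℝ) : pqX q none = 2 / 5 := by
  simp [pqX, pq, Fintype.sum_option]

theorem pqX_some (q : Fin 3 → ℝ) (i : Fin 3) : pqX q (some i) = 5⁻¹ := by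
  fin_cases i <;> simp [pqX, pq, Fintype.sum_option, Fin.sum_univ_three] <;> ring

theorem pqY_none (q : Fin 3 → ℝ) : pqY q none = 2 / 5 := by
  simp [pqY, pq, Fintype.sum_option]

theorem pqY_some (q : Fin 3 → ℝ) (j : Fin 3) :
    pqY q (some j) = (1 - q j) / 5 + q (j - 1) / 5 := by
  fin_cases j <;>
    simp [pqY, pq, Fintype.sum_option, Fin.sum_univ_three, show (-1 : Fin 3) = 2 from rfl] <;> ring

theorem mutualInfo_eq_sum {q : Fin 3 → ℝ} (hq : ∀ i, q i ∈ Set.Icc (0 : ℝ) 1) :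
    mutualInfo q = ∑ x, ∑ y, pq q x y * logb 2 (pq q x y / (pqX q x * pqY q y)) := by
  refine Finset.sum_congr rfl fun x _ => Finset.sum_congr rfl fun y _ => ?_
  rcases (pq_nonneg hq x y).eq_or_lt with h | h
  · simp [← h]
  · simp [h]

theorem mutualInfo_eq_pairInfo {q : Fin 3 → ℝ} (hq : ∀ i, q i ∈ Set.Icc (0 : ℝ) 1) :
    mutualInfo q = 2 / 5 * logb 2 (5 / 2) + pairInfo 5⁻¹ ((1 - q 0) / 5) (q 2 / 5)
      + pairInfo 5⁻¹ ((1 - q 1) / 5) (q 0 / 5) + pairInfo 5⁻¹ ((1 - q 2) / 5) (q 1 / 5) := by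
  rw [mutualInfo_eq_sum hq]
  simp +decide [Fintype.sum_option, Fin.sum_univ_three, pq, pqX_none, pqX_some, pqY_none,
    pqY_some, pairInfo, show (-1 : Fin 3) = 2 from rfl]
  ring

/-- **Example 2 of the paper**: `min_{q ∈ [0,1]³} I(q) = log₂(5/2)`; in particular
`I(q) ≥ log₂(5/2)` for every `q ∈ [0,1]³`, with equality at `q = (1/2,1/2,1/2)`. -/
theorem example2_min_mutualInfo :
    (∀ q : Fin 3 → ℝ, (∀ i, q i ∈ Set.Icc (0 : ℝ) 1) →
      Real.logb 2 (5 / 2) ≤ mutualInfo q) ∧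
    mutualInfo (fun _ => 1 / 2) = Real.logb 2 (5 / 2) := by
  constructor
  · intro q hq
    have hpair (i j : Fin 3) :
        ((1 - q i) / 5 + q j / 5) * logb 2 (5 / 2) ≤ pairInfo 5⁻¹ ((1 - q i) / 5) (q j / 5) := by
      have := mul_logb_inv_div_two_le_pairInfo 5⁻¹ ((1 - q i) / 5) (q j / 5) (by norm_num)
        (by linarith [(hq i).2]) (by linarith [(hq j).1])
      rwa [inv_inv] at this
    rw [mutualInfo_eq_pairInfo hq]
    linarith [hpair 0 2, hpair 1 0, hpair 2 1]
  · rw [mutualInfo_eq_pairInfo fun _ => by norm_num]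
    norm_num [pairInfo_self]
    ring

end
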